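/- For all real numbers 0 < a < b and every integer k ≥ 0, there exists a real polynomial p of degree at most k such that sup_{x ∈ [a,b]} |1/x − p(x)| ≤ C·q^{k+1}, where q = (√b − √a)/(√b + √a) and C = (√b + √a)²/(2ab). -/
import Mathlib


open Matrix

noncomputable def qval (a b : ℝ) : ℝ := (Real.sqrt b - Real.sqrt a) / (Real.sqrt b + Real.sqrt a)

noncomputable def Cval (a b : ℝ) : ℝ := (Real.sqrt b + Real.sqrt a) ^ 2 / (2 * a * b)

section AuxLemmas
open Polynomial Polynomial.Chebyshev Real

lemma evalT (z : ℝ) (hz : z ≠ 0) : ∀ n : ℤ,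
    (Chebyshev.T ℝ n).eval ((z + z⁻¹) / 2) = (z ^ n + z ^ (-n)) / 2 := by
  intro n
  induction n using Polynomial.Chebyshev.induct with
  | zero => simp
  | one => simp [zpow_one]
  | add_two n ih1 ih2 =>
    rw [Chebyshev.T_add_two]
    have e1 : z ^ ((n : ℤ) + 1) = z ^ (n : ℤ) * z := zpow_add_one₀ hz n
    have e2 : z ^ ((n : ℤ) + 2) = z ^ (n : ℤ) * z * z := by
      rw [show (n : ℤ) + 2 = (n + 1) + 1 by ring, zpow_add_one₀ hz, zpow_add_one₀ hz]
    have e3 : z ^ (-((n : ℤ) + 1)) = (z ^ (n : ℤ))⁻¹ * z⁻¹ := by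
      rw [show -((n : ℤ) + 1) = -(n:ℤ) + -1 by ring, zpow_add₀ hz, _root_.zpow_neg, _root_.zpow_neg, zpow_one]
    have e4 : z ^ (-((n : ℤ) + 2)) = (z ^ (n : ℤ))⁻¹ * z⁻¹ * z⁻¹ := by
      rw [show -((n : ℤ) + 2) = -((n:ℤ) + 1) + -1 by ring, zpow_add₀ hz, e3]
      norm_num
    have e5 : z ^ (-(n : ℤ)) = (z ^ (n : ℤ))⁻¹ := _root_.zpow_neg z n
    have hu : z ^ (n : ℤ) ≠ 0 := zpow_ne_zero _ hz
    simp only [eval_sub, eval_mul, eval_ofNat, eval_X, ih1, ih2, e1, e2, e3, e4, e5]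
    field_simp
    ring
  | neg_add_one n ih1 ih2 =>
    have hrec := Chebyshev.T_sub_one ℝ (-(n : ℤ))
    rw [show -(n:ℤ) - 1 = -(n:ℤ) - 1 from rfl, hrec]
    have e1 : z ^ (-(n : ℤ)) = (z ^ (n : ℤ))⁻¹ := _root_.zpow_neg z n
    have e2 : z ^ (-(n : ℤ) + 1) = (z ^ (n : ℤ))⁻¹ * z := by
      rw [zpow_add_one₀ hz, e1]
    have e3 : z ^ (-(-(n:ℤ) + 1)) = z ^ (n : ℤ) * z⁻¹ := by
      rw [show -(-(n:ℤ) + 1) = (n:ℤ) + -1 by ring, zpow_add₀ hz, _root_.zpow_neg, zpow_one]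
    have e4 : z ^ (-(n : ℤ) - 1) = (z ^ (n : ℤ))⁻¹ * z⁻¹ := by
      rw [show -(n:ℤ) - 1 = -(n:ℤ) + -1 by ring, zpow_add₀ hz, e1, _root_.zpow_neg, zpow_one]
    have e5 : z ^ (-(-(n:ℤ) - 1)) = z ^ (n : ℤ) * z := by
      rw [show -(-(n:ℤ) - 1) = (n:ℤ) + 1 by ring, zpow_add_one₀ hz]
    have e6 : z ^ (-(-(n:ℤ))) = z ^ (n:ℤ) := by rw [neg_neg]
    have hu : z ^ (n : ℤ) ≠ 0 := zpow_ne_zero _ hz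
    simp only [eval_sub, eval_mul, eval_ofNat, eval_X, ih1, ih2, e1, e2, e3, e4, e5, e6]
    field_simp
    ring

lemma degT : ∀ n : ℤ, (Chebyshev.T ℝ n).natDegree ≤ n.natAbs := by
  intro n
  induction n using Polynomial.Chebyshev.induct with
  | zero => simp
  | one => simpa using Polynomial.natDegree_X_le
  | add_two n ih1 ih2 =>
    rw [Chebyshev.T_add_two]
    refine le_trans (natDegree_sub_le _ _) (max_le ?_ ?_)
    · refine le_trans (natDegree_mul_le) ?_
      have h2x : ((2 : ℝ[X]) * X).natDegree ≤ 1 :=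
        le_trans natDegree_mul_le (by simp)
      have := add_le_add h2x ih1
      omega
    · omega
  | neg_add_one n ih1 ih2 =>
    rw [Chebyshev.T_sub_one ℝ (-(n:ℤ))]
    refine le_trans (natDegree_sub_le _ _) (max_le ?_ ?_)
    · refine le_trans (natDegree_mul_le) ?_
      have h2x : ((2 : ℝ[X]) * X).natDegree ≤ 1 :=
        le_trans natDegree_mul_le (by simp)
      have := add_le_add h2x ih1
      omega
    · omega

lemma quadBound (A D R c s : ℝ) (h1 : s^2 + c^2 = 1) (h2 : A^2 + D^2 = R^2)
    (hR : 0 ≤ R) : |A*c + D*s| ≤ R := by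
  apply abs_le_of_sq_le_sq _ hR
  have hiden : (A*c + D*s)^2 = R^2 - (A*s - D*c)^2 := by
    linear_combination (A^2 + D^2) * h1 + h2
  rw [hiden]
  linarith [sq_nonneg (A*s - D*c)]

lemma cosBound (z θ : ℝ) (hz : z ^ 2 ≤ 1) (k : ℕ) :
    |Real.cos (((k:ℝ) + 1) * θ) - 2 * z * Real.cos ((k:ℝ) * θ)
      + z ^ 2 * Real.cos (((k:ℝ) - 1) * θ)| ≤ 1 - 2 * z * Real.cos θ + z ^ 2 := by
  have h1 : ((k:ℝ) + 1) * θ = (k:ℝ) * θ + θ := by ring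
  have h2 : ((k:ℝ) - 1) * θ = (k:ℝ) * θ - θ := by ring
  rw [h1, h2, Real.cos_add, Real.cos_sub]
  have hpy : Real.sin ((k:ℝ)*θ) ^ 2 + Real.cos ((k:ℝ)*θ) ^ 2 = 1 := Real.sin_sq_add_cos_sq _
  have hpy0 : Real.sin θ ^ 2 + Real.cos θ ^ 2 = 1 := Real.sin_sq_add_cos_sq θ
  have hc1 : Real.cos θ ≤ 1 := Real.cos_le_one θ
  have hc2 : -1 ≤ Real.cos θ := Real.neg_one_le_cos θ
  have hR : 0 ≤ 1 - 2 * z * Real.cos θ + z ^ 2 := by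
    rcases le_or_gt 0 z with hz0 | hz0
    · nlinarith [sq_nonneg (1 - z), mul_nonneg hz0 (by linarith : (0:ℝ) ≤ 1 - Real.cos θ)]
    · nlinarith [sq_nonneg (1 + z),
        mul_nonneg (neg_nonneg.mpr hz0.le) (by linarith : (0:ℝ) ≤ 1 + Real.cos θ)]
  have key := quadBound ((1 + z^2) * Real.cos θ - 2*z) ((z^2 - 1) * Real.sin θ)
      (1 - 2 * z * Real.cos θ + z ^ 2) (Real.cos ((k:ℝ)*θ)) (Real.sin ((k:ℝ)*θ))
      hpy (by linear_combination (1 - z^2)^2 * hpy0) hR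
  calc |Real.cos ((k:ℝ)*θ) * Real.cos θ - Real.sin ((k:ℝ)*θ) * Real.sin θ
        - 2 * z * Real.cos ((k:ℝ)*θ)
        + z ^ 2 * (Real.cos ((k:ℝ)*θ) * Real.cos θ + Real.sin ((k:ℝ)*θ) * Real.sin θ)|
      = |((1 + z^2) * Real.cos θ - 2*z) * Real.cos ((k:ℝ)*θ)
          + ((z^2 - 1) * Real.sin θ) * Real.sin ((k:ℝ)*θ)| := by ring_nf
    _ ≤ 1 - 2 * z * Real.cos θ + z ^ 2 := key

end AuxLemmas

set_option maxHeartbeats 2000000 in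
/-- Chebyshev-type best approximation of `1/x` on `[a,b] ⊂ (0,∞)` by polynomials
of degree at most `k`, with error `C·q^(k+1)`. -/
theorem stmt8 (a b : ℝ) (ha : 0 < a) (hab : a < b) (k : ℕ) :
    ∃ p : Polynomial ℝ, p.natDegree ≤ k ∧
      ∀ x ∈ Set.Icc a b, |1 / x - p.eval x| ≤ Cval a b * qval a b ^ (k + 1) := by
  have hb : 0 < b := lt_trans ha hab
  set s := Real.sqrt a with hsdef
  set r := Real.sqrt b with hrdef
  have hs : 0 < s := Real.sqrt_pos.mpr ha
  have hsr : s < r := Real.sqrt_lt_sqrt ha.le hab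
  have hr : 0 < r := lt_trans hs hsr
  have ha2 : s ^ 2 = a := Real.sq_sqrt ha.le
  have hb2 : r ^ 2 = b := Real.sq_sqrt hb.le
  set q : ℝ := (r - s) / (r + s) with hqdef
  have hqval : qval a b = q := rfl
  have hrs : 0 < r + s := by linarith
  have hq0 : 0 < q := div_pos (by linarith) hrs
  have hq1 : q < 1 := (div_lt_one hrs).mpr (by linarith)
  set z : ℝ := -q with hzdef
  have hzne : z ≠ 0 := by simp [hzdef]; linarith
  have hz2 : z ^ 2 < 1 := by
    have hqq : q ^ 2 < 1 := by nlinarith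
    rw [hzdef]; simpa [neg_pow] using hqq
  have hz2ne : (1 : ℝ) - z ^ 2 ≠ 0 := ne_of_gt (by linarith)
  set m : ℝ := (a + b) / 2 with hmdef
  set d : ℝ := (b - a) / 2 with hddef
  have hd : 0 < d := by rw [hddef]; linarith
  set G : Polynomial ℝ := Polynomial.Chebyshev.T ℝ ((k : ℤ) + 1)
      + Polynomial.C (-(2 * z)) * Polynomial.Chebyshev.T ℝ (k : ℤ)
      + Polynomial.C (z ^ 2) * Polynomial.Chebyshev.T ℝ ((k : ℤ) - 1) with hGdef
  set L : Polynomial ℝ := Polynomial.C d⁻¹ * (Polynomial.X - Polynomial.C m) with hLdef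
  set B : ℝ := 2 * z ^ (k + 1) / (1 - z ^ 2) ^ 2 with hBdef
  set num : Polynomial ℝ := Polynomial.C 1 - Polynomial.C B * (G.comp L) with hnumdef
  clear_value s r q z m d G L B num
  -- the key point identity: -(m/d) = (z + z⁻¹)/2
  have hmd : d⁻¹ * (0 - m) = (z + z⁻¹) / 2 := by
    have hrsne : r + s ≠ 0 := ne_of_gt hrs
    have hrsne2 : r - s ≠ 0 := ne_of_gt (by linarith)
    have h3 : r ^ 2 - s ^ 2 ≠ 0 := by
      have : r ^ 2 - s ^ 2 = (r - s) * (r + s) := by ring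
      rw [this]; exact ne_of_gt (mul_pos (by linarith) hrs)
    have hzinv : z⁻¹ = -((r + s) / (r - s)) := by
      rw [hzdef, hqdef, inv_neg, inv_div]
    rw [hzinv, hzdef, hqdef, hmdef, hddef, ← ha2, ← hb2]
    field_simp
    ring
  have hu : z ^ (k : ℤ) = z ^ k := zpow_natCast z k
  have hune : z ^ k ≠ 0 := pow_ne_zero _ hzne
  have e1 : z ^ ((k : ℤ) + 1) = z ^ k * z := by rw [zpow_add_one₀ hzne, hu]
  have e2 : z ^ (-((k : ℤ) + 1)) = (z ^ k)⁻¹ * z⁻¹ := by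
    rw [show -((k:ℤ) + 1) = -(k:ℤ) + -1 by ring, zpow_add₀ hzne, _root_.zpow_neg, _root_.zpow_neg, hu, zpow_one]
  have e3 : z ^ ((k : ℤ) - 1) = z ^ k * z⁻¹ := by
    rw [show (k:ℤ) - 1 = (k:ℤ) + -1 by ring, zpow_add₀ hzne, hu, _root_.zpow_neg, zpow_one]
  have e4 : z ^ (-((k : ℤ) - 1)) = (z ^ k)⁻¹ * z := by
    rw [show -((k:ℤ) - 1) = -(k:ℤ) + 1 by ring, zpow_add_one₀ hzne, _root_.zpow_neg, hu]
  have e5 : z ^ (-(k : ℤ)) = (z ^ k)⁻¹ := by rw [_root_.zpow_neg, hu]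
  have heval0 : num.eval 0 = 0 := by
    rw [hnumdef]
    simp only [Polynomial.eval_sub, Polynomial.eval_mul, Polynomial.eval_C,
      Polynomial.eval_comp, hLdef, Polynomial.eval_X, Polynomial.eval_one]
    rw [hmd, hGdef]
    simp only [Polynomial.eval_add, Polynomial.eval_mul, Polynomial.eval_C,
      evalT z hzne]
    rw [e1, e2, e3, e4, e5, hu, hBdef]
    field_simp
    ring
  have hXdvd : Polynomial.X ∣ num := by
    rw [Polynomial.X_dvd_iff, Polynomial.coeff_zero_eq_eval_zero]
    exact heval0
  obtain ⟨p, hp⟩ := hXdvd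
  refine ⟨p, ?_, ?_⟩
  · -- degree bound
    have hdG : G.natDegree ≤ k + 1 := by
      rw [hGdef]
      refine le_trans (Polynomial.natDegree_add_le _ _) (max_le ?_ ?_)
      · refine le_trans (Polynomial.natDegree_add_le _ _) (max_le ?_ ?_)
        · have := degT ((k : ℤ) + 1); omega
        · refine le_trans (Polynomial.natDegree_mul_le) ?_
          have := degT (k : ℤ); simp only [Polynomial.natDegree_C]; omega
      · refine le_trans (Polynomial.natDegree_mul_le) ?_
        have := degT ((k : ℤ) - 1); simp only [Polynomial.natDegree_C]; omega
    have hdL : L.natDegree ≤ 1 := by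
      rw [hLdef]
      refine le_trans (Polynomial.natDegree_mul_le) ?_
      simp only [Polynomial.natDegree_C, zero_add]
      exact le_trans (Polynomial.natDegree_sub_le _ _) (by simp)
    have hdGL : (G.comp L).natDegree ≤ k + 1 := by
      refine le_trans (Polynomial.natDegree_comp_le) ?_
      calc G.natDegree * L.natDegree ≤ (k+1) * 1 := Nat.mul_le_mul hdG hdL
        _ = k + 1 := by ring
    have hdnum : num.natDegree ≤ k + 1 := by
      rw [hnumdef]
      refine le_trans (Polynomial.natDegree_sub_le _ _) (max_le (by simp) ?_)
      refine le_trans (Polynomial.natDegree_mul_le) ?_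
      simpa using hdGL
    by_cases hp0 : p = 0
    · simp [hp0]
    · have hmul := Polynomial.natDegree_mul (Polynomial.X_ne_zero) hp0
      rw [← hp] at hmul
      rw [Polynomial.natDegree_X] at hmul
      omega
  · intro x hx
    obtain ⟨hax, hxb⟩ := hx
    have hx0 : 0 < x := lt_of_lt_of_le ha hax
    set t : ℝ := d⁻¹ * (x - m) with htdef
    have ht' : t = (x - m) / d := by rw [htdef]; ring
    have htlo : -1 ≤ t := by
      rw [ht', le_div_iff₀ hd, hmdef, hddef]; linarith
    have hthi : t ≤ 1 := by
      rw [ht', div_le_one hd, hmdef, hddef]; linarith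
    set θ := Real.arccos t with hθdef
    have hcos : Real.cos θ = t := Real.cos_arccos htlo hthi
    have hGt : (G.comp L).eval x = G.eval t := by
      rw [Polynomial.eval_comp, hLdef]
      simp [htdef]
    have hnumx : 1 - B * G.eval t = x * p.eval x := by
      have := congrArg (Polynomial.eval x) hp
      simp only [hnumdef, Polynomial.eval_sub, Polynomial.eval_mul, Polynomial.eval_C,
        Polynomial.eval_one, Polynomial.eval_X] at this
      rw [hGt] at this
      exact this
    have herr : 1 / x - p.eval x = B * G.eval t / x := by
      field_simp
      linarith [hnumx]
    -- bound on G.eval t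
    have hGbound : |G.eval t| ≤ 1 - 2 * z * t + z ^ 2 := by
      rw [← hcos, hGdef]
      simp only [Polynomial.eval_add, Polynomial.eval_mul, Polynomial.eval_C,
        Polynomial.Chebyshev.T_real_cos]
      have hcast1 : (((k : ℤ) + 1 : ℤ) : ℝ) = (k : ℝ) + 1 := by push_cast; ring
      have hcast2 : (((k : ℤ) - 1 : ℤ) : ℝ) = (k : ℝ) - 1 := by push_cast; ring
      have hcast3 : (((k : ℤ)) : ℝ) = (k : ℝ) := by push_cast; ring
      rw [hcast1, hcast2, hcast3]
      have := cosBound z θ hz2.le k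
      calc |Real.cos (((k:ℝ)+1) * θ) + -(2*z) * Real.cos ((k:ℝ) * θ)
            + z^2 * Real.cos (((k:ℝ)-1) * θ)|
          = |Real.cos (((k:ℝ)+1) * θ) - 2*z * Real.cos ((k:ℝ) * θ)
            + z^2 * Real.cos (((k:ℝ)-1) * θ)| := by ring_nf
        _ ≤ 1 - 2 * z * Real.cos θ + z ^ 2 := this
    have hdm : d * (1 + q ^ 2) = 2 * q * m := by
      rw [hqdef, hmdef, hddef, ← ha2, ← hb2]
      field_simp
      ring
    have hdne : d ≠ 0 := ne_of_gt hd
    have hline : 1 - 2 * z * t + z ^ 2 = 2 * q / d * x := by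
      have step : 1 - 2 * z * t + z ^ 2 = (d * (1 + q ^ 2) + 2 * q * (x - m)) / d := by
        rw [hzdef, htdef]
        field_simp
        ring
      rw [step, hdm]
      field_simp
      ring
    have hBabs : |B| = 2 * q ^ (k + 1) / (1 - q ^ 2) ^ 2 := by
      rw [hBdef, hzdef, abs_div, abs_mul, abs_pow, abs_neg, abs_of_pos hq0,
        abs_of_pos (by norm_num : (0:ℝ) < 2), abs_of_nonneg (sq_nonneg _)]
      ring_nf
    have hrsne : r + s ≠ 0 := ne_of_gt hrs
    have hrsne2 : r - s ≠ 0 := ne_of_gt (by linarith)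
    have hsne : s ≠ 0 := ne_of_gt hs
    have hrne : r ≠ 0 := ne_of_gt hr
    have h1q : 1 - q ^ 2 = 4 * r * s / (r + s) ^ 2 := by
      rw [hqdef]
      field_simp
      ring
    have hkey : 2 / (1 - q ^ 2) ^ 2 * (2 * q / d) = Cval a b := by
      rw [h1q, hqdef, hddef, Cval, ← hsdef, ← hrdef, ← ha2, ← hb2]
      have hd2 : r ^ 2 - s ^ 2 ≠ 0 := by
        have : r ^ 2 - s ^ 2 = (r - s) * (r + s) := by ring
        rw [this]; exact ne_of_gt (mul_pos (by linarith) hrs)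
      field_simp
      ring
    have hfinal : 2 * q ^ (k + 1) / (1 - q ^ 2) ^ 2 * (2 * q / d)
        = Cval a b * q ^ (k + 1) := by
      rw [← hkey]
      ring
    rw [hqval, herr]
    rw [abs_div, abs_of_pos hx0]
    rw [div_le_iff₀ hx0]
    calc |B * G.eval t| ≤ |B| * (1 - 2 * z * t + z ^ 2) := by
          rw [abs_mul]
          exact mul_le_mul_of_nonneg_left hGbound (abs_nonneg B)
      _ = |B| * (2 * q / d) * x := by rw [hline]; ring
      _ = Cval a b * q ^ (k + 1) * x := by rw [hBabs, hfinal]
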